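/- Let V be an n-dimensional vector space over ℝ, and let v₁, …, v_d and w₁, …, w_d each be linearly independent families in V such that v₁ ∧ v₂ ∧ … ∧ v_d = c · (w₁ ∧ w₂ ∧ … ∧ w_d) in ⋀^d V for some nonzero scalar c. Then span{v₁, …, v_d} = span{w₁, …, w_d}. Consequently the Plücker map from the Grassmannian of d-planes in V to the projectivization of ⋀^d V is injective. -/

import Mathlib

/-!
For a linearly independent family `u`, a vector `x` lies in the span of `u` exactly when
`x ∧ u₁ ∧ ⋯ ∧ u_m = 0`, since that wedge is the wedge of the family `x, u₁, …, u_m`, which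
vanishes iff that family is dependent. Proportional wedges therefore cut out the same span.
-/

open ExteriorAlgebra

section

variable {K V : Type*} [Field K] [AddCommGroup V] [Module K V]

theorem ιMulti_ne_zero_iff {m : ℕ} {u : Fin m → V} :
    ιMulti K m u ≠ 0 ↔ LinearIndependent K u := by
  refine ⟨not_imp_comm.mp ((ιMulti K m).map_linearDependent u), fun hu ↦ ?_⟩
  -- `ιMulti u` is the member, indexed by all of `Fin m`, of a linearly independent family.
  have hfamily := (exteriorPower.ιMulti_family_linearIndependent_field (n := m) hu).ne_zero
    (Set.powersetCard.ofFinEmbEquiv (OrderIso.refl (Fin m)).toOrderEmbedding)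
  simp only [exteriorPower.ιMulti_family, Equiv.symm_apply_apply] at hfamily
  exact fun h0 ↦ hfamily (Subtype.ext h0)

theorem ι_mul_ιMulti_eq_zero_iff {m : ℕ} {u : Fin m → V} (hu : LinearIndependent K u) (x : V) :
    ι K x * ιMulti K m u = 0 ↔ x ∈ Submodule.span K (Set.range u) := by
  have hcons : ι K x * ιMulti K m u = ιMulti K (m + 1) (Fin.cons x u) := by
    rw [ιMulti_succ_apply, Fin.cons_zero, Matrix.vecTail, Fin.cons_comp_succ]
  rw [hcons, ← not_iff_not, ← Ne, ιMulti_ne_zero_iff, linearIndependent_finCons, and_iff_right hu]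

end

theorem span_eq_span_of_wedge_eq_smul_wedge_general {V : Type*} [AddCommGroup V] [Module ℝ V]
    (d : ℕ) (v w : Fin d → V) (hv : LinearIndependent ℝ v) (hw : LinearIndependent ℝ w)
    (c : ℝ) (hc : c ≠ 0)
    (h : ExteriorAlgebra.ιMulti ℝ d v = c • ExteriorAlgebra.ιMulti ℝ d w) :
    Submodule.span ℝ (Set.range v) = Submodule.span ℝ (Set.range w) := by
  ext x
  rw [← ι_mul_ιMulti_eq_zero_iff hv, ← ι_mul_ιMulti_eq_zero_iff hw, h, mul_smul_comm,
    smul_eq_zero, or_iff_right hc]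

/-- Let `V` be an `n`-dimensional real vector space and let `v₁, …, v_d` and `w₁, …, w_d` be
linearly independent families in `V` with `v₁ ∧ ⋯ ∧ v_d = c • (w₁ ∧ ⋯ ∧ w_d)` for some nonzero
scalar `c`.  Then `span{v₁, …, v_d} = span{w₁, …, w_d}`.  Consequently the Plücker map from the
Grassmannian of `d`-planes in `V` to the projectivization of `⋀^d V` is injective. -/
theorem span_eq_span_of_wedge_eq_smul_wedge {V : Type*} [AddCommGroup V] [Module ℝ V]
    [FiniteDimensional ℝ V] (n d : ℕ) (hn : Module.finrank ℝ V = n)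
    (v w : Fin d → V) (hv : LinearIndependent ℝ v) (hw : LinearIndependent ℝ w)
    (c : ℝ) (hc : c ≠ 0)
    (h : ExteriorAlgebra.ιMulti ℝ d v = c • ExteriorAlgebra.ιMulti ℝ d w) :
    Submodule.span ℝ (Set.range v) = Submodule.span ℝ (Set.range w) :=
  span_eq_span_of_wedge_eq_smul_wedge_general d v w hv hw c hc h
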